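/- arXiv:2202.08576 — 3 statements merged into one kernel-verified Lean document; each statement's English description precedes it below -/
import Mathlib

section
/- Let q_1, q_2, q_3 ≥ 0 with q_1+q_2+q_3 = 1 and q_1+q_2 > 0, and (N_1,N_2,N_3) ~ Multinomial(n; q_1,q_2,q_3) with n ≥ 1. Conditionally on N_1+N_2 ≠ 0, the estimator π̂ = (N_2·q − N_1·p)/((N_1+N_2)(q−p)) is unbiased for π, where q_1 = πp+(1−π)q, q_2 = πq+(1−π)p, q_3 = 1−p−q, 0 ≤ q < p ≤ 1, p+q ≤ 1, π ∈ [0,1]. That is, E[π̂ | N_1+N_2 ≠ 0] = π. -/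
/-!
Condition on the number `n₃ < n` of 'don't know' answers: then `N₁ + N₂ = m := n - n₃`,
`N₁` is binomial with `m` trials and success probability `q₁ / (q₁ + q₂)`, and
`π̂ = (N₂ q - N₁ p) / (m (q - p))` is affine in the counts. The binomial means
`m q₁ / (q₁ + q₂)` and `m q₂ / (q₁ + q₂)` give the conditional mean
`(q q₂ - p q₁) / ((q₁ + q₂)(q - p)) = π`, because `q₁ + q₂ = p + q` and
`q q₂ - p q₁ = π (q - p)(p + q)`. Averaging over `n₃ < n` with the weights
`C(n, n₃) q₃^n₃ (p + q)^(n - n₃)`, whose total is `1 - q₃ⁿ`, leaves `π`.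
-/

open Finset

section Binomial

variable {R : Type*} [CommSemiring R]

theorem sum_range_choose_mul_pow_mul_pow (x y : R) (m : ℕ) :
    ∑ k ∈ range (m + 1), (m.choose k : R) * x ^ k * y ^ (m - k) = (x + y) ^ m := by
  rw [add_pow]
  exact sum_congr rfl fun k _ => by ring

theorem sum_range_mul_choose_mul_pow_mul_pow (x y : R) (m : ℕ) :
    ∑ k ∈ range (m + 1), (k : R) * m.choose k * x ^ k * y ^ (m - k)
      = m * x * (x + y) ^ (m - 1) := by
  cases m with
  | zero => simp
  | succ s =>
    have hterm : ∀ i ∈ range (s + 1),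
        ((i + 1 : ℕ) : R) * (s + 1).choose (i + 1) * x ^ (i + 1) * y ^ (s + 1 - (i + 1))
          = (s + 1) * x * ((s.choose i : R) * x ^ i * y ^ (s - i)) := by
      intro i _
      have hchoose : ((i + 1 : ℕ) : R) * (s + 1).choose (i + 1) = (s + 1) * s.choose i := by
        norm_cast
        rw [Nat.add_one_mul_choose_eq, mul_comm]
      rw [Nat.add_sub_add_right, hchoose]
      ring
    rw [sum_range_succ', sum_congr rfl hterm, ← mul_sum, sum_range_choose_mul_pow_mul_pow]
    simp

theorem sum_range_sub_mul_choose_mul_pow_mul_pow (x y : R) (m : ℕ) :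
    ∑ k ∈ range (m + 1), ((m - k : ℕ) : R) * m.choose k * x ^ k * y ^ (m - k)
      = m * y * (x + y) ^ (m - 1) := by
  rw [← sum_range_reflect, add_comm x, ← sum_range_mul_choose_mul_pow_mul_pow]
  refine sum_congr rfl fun k hk => ?_
  have hkm : k ≤ m := Nat.lt_succ_iff.mp (mem_range.mp hk)
  rw [Nat.add_sub_cancel, Nat.sub_sub_self hkm, Nat.choose_symm hkm]
  ring

theorem sum_range_choose_mul_pow_mul_pow_add_pow (x y : R) (n : ℕ) :
    ∑ k ∈ range n, (n.choose k : R) * x ^ k * y ^ (n - k) + x ^ n = (x + y) ^ n := by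
  rw [← sum_range_choose_mul_pow_mul_pow, sum_range_succ]
  simp

end Binomial

section Estimator

variable {K : Type*} [Field K]

def warnerEstimator (p q : K) (n1 n2 : ℕ) : K :=
  (n2 * q - n1 * p) / ((n1 + n2) * (q - p))

theorem sum_range_warnerEstimator_mul_choose_mul_pow_mul_pow [CharZero K] (p q x y : K)
    {m : ℕ} (hm : m ≠ 0) :
    ∑ k ∈ range (m + 1), warnerEstimator p q k (m - k) * m.choose k * x ^ k * y ^ (m - k)
      = (q * y - p * x) / (q - p) * (x + y) ^ (m - 1) := by
  have hterm : ∀ k ∈ range (m + 1),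
      warnerEstimator p q k (m - k) * m.choose k * x ^ k * y ^ (m - k)
        = (q * (((m - k : ℕ) : K) * m.choose k * x ^ k * y ^ (m - k))
            - p * ((k : K) * m.choose k * x ^ k * y ^ (m - k))) / (m * (q - p)) := by
    intro k hk
    have hsize : (k : K) + ((m - k : ℕ) : K) = m := by
      rw [← Nat.cast_add, Nat.add_sub_cancel' (Nat.lt_succ_iff.mp (mem_range.mp hk))]
    rw [warnerEstimator, hsize]
    ring
  have hm' : (m : K) ≠ 0 := Nat.cast_ne_zero.mpr hm
  rw [sum_congr rfl hterm, ← sum_div, sum_sub_distrib, ← mul_sum, ← mul_sum,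
    sum_range_mul_choose_mul_pow_mul_pow, sum_range_sub_mul_choose_mul_pow_mul_pow]
  field_simp

end Estimator

theorem sum_trinomial_ite_eq_sum_binomial {R : Type*} [CommSemiring R] (f : ℕ → ℕ → R)
    (x y z : R) (n : ℕ) :
    ∑ n3 ∈ range (n + 1), ∑ n1 ∈ range (n - n3 + 1),
        (if n3 = n then 0 else
          f n1 (n - n3 - n1) * n.choose n3 * (n - n3).choose n1 * x ^ n1 * y ^ (n - n3 - n1)
            * z ^ n3)
      = ∑ n3 ∈ range n, n.choose n3 * z ^ n3 * ∑ n1 ∈ range (n - n3 + 1),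
          f n1 (n - n3 - n1) * (n - n3).choose n1 * x ^ n1 * y ^ (n - n3 - n1) := by
  rw [sum_range_succ]
  simp only [if_true, sum_const_zero, add_zero, mul_sum]
  refine sum_congr rfl fun n3 hn3 => sum_congr rfl fun n1 _ => ?_
  rw [if_neg (mem_range.mp hn3).ne]
  ring

theorem warner_mle_unbiased_general (n : ℕ) (hn : 1 ≤ n) (p q π : ℝ)
    (hq0 : 0 ≤ q) (hqp : q < p) (hpq : p + q ≤ 1)
    (q1 q2 q3 : ℝ)
    (hq1 : q1 = π * p + (1 - π) * q)
    (hq2 : q2 = π * q + (1 - π) * p)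
    (hq3 : q3 = 1 - p - q) :
    (∑ n3 ∈ Finset.range (n + 1), ∑ n1 ∈ Finset.range (n - n3 + 1),
        (if n3 = n then 0 else
          ((((n - n3 - n1 : ℕ) : ℝ) * q - (n1 : ℝ) * p) /
              (((n1 : ℝ) + ((n - n3 - n1 : ℕ) : ℝ)) * (q - p))) *
            (n.choose n3 : ℝ) * (((n - n3).choose n1 : ℝ)) *
            q1 ^ n1 * q2 ^ (n - n3 - n1) * q3 ^ n3))
      / (1 - q3 ^ n) = π := by
  have hden : 1 - q3 ^ n ≠ 0 :=
    sub_ne_zero.mpr (pow_lt_one₀ (by linarith) (by linarith) (by omega)).ne'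
  have hcond : ∀ m ≠ 0, ∑ k ∈ range (m + 1),
      warnerEstimator p q k (m - k) * m.choose k * q1 ^ k * q2 ^ (m - k) = π * (p + q) ^ m := by
    intro m hm
    have hsum : q1 + q2 = p + q := by rw [hq1, hq2]; ring
    have hdiff : q * q2 - p * q1 = π * (p + q) * (q - p) := by rw [hq1, hq2]; ring
    rw [sum_range_warnerEstimator_mul_choose_mul_pow_mul_pow p q q1 q2 hm, hsum, hdiff,
      mul_div_cancel_right₀ _ (sub_ne_zero.mpr hqp.ne), mul_assoc, ← pow_succ',
      Nat.sub_one_add_one hm]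
  rw [div_eq_iff hden]
  -- `refine`, not `rw`: the goal contains `warnerEstimator p q` only in unfolded form.
  refine (sum_trinomial_ite_eq_sum_binomial (warnerEstimator p q) q1 q2 q3 n).trans ?_
  have hbinom := sum_range_choose_mul_pow_mul_pow_add_pow q3 (p + q) n
  rw [show q3 + (p + q) = 1 by linarith, one_pow] at hbinom
  rw [← hbinom, add_sub_cancel_right, mul_sum]
  refine sum_congr rfl fun n3 hn3 => ?_
  rw [hcond _ (Nat.sub_ne_zero_of_lt (mem_range.mp hn3))]
  ring

theorem warner_mle_unbiased (n : ℕ) (hn : 1 ≤ n) (p q π : ℝ)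
    (hq0 : 0 ≤ q) (hqp : q < p) (hp1 : p ≤ 1) (hpq : p + q ≤ 1)
    (hπ0 : 0 ≤ π) (hπ1 : π ≤ 1)
    (q1 q2 q3 : ℝ)
    (hq1 : q1 = π * p + (1 - π) * q)
    (hq2 : q2 = π * q + (1 - π) * p)
    (hq3 : q3 = 1 - p - q) :
    (∑ n3 ∈ Finset.range (n + 1), ∑ n1 ∈ Finset.range (n - n3 + 1),
        (if n3 = n then 0 else
          ((((n - n3 - n1 : ℕ) : ℝ) * q - (n1 : ℝ) * p) /
              (((n1 : ℝ) + ((n - n3 - n1 : ℕ) : ℝ)) * (q - p))) *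
            (n.choose n3 : ℝ) * (((n - n3).choose n1 : ℝ)) *
            q1 ^ n1 * q2 ^ (n - n3 - n1) * q3 ^ n3))
      / (1 - q3 ^ n) = π :=
  warner_mle_unbiased_general n hn p q π hq0 hqp hpq q1 q2 q3 hq1 hq2 hq3
end

section
/- Let q_1,q_2,q_3 ≥ 0 with q_1+q_2+q_3=1, q_1+q_2>0, n ≥ 1, and (N_1,N_2,N_3) ~ Multinomial(n; q_1,q_2,q_3). Then E[(N_1/(N_1+N_2))² ; N_1+N_2≠0] = (q_1q_2/(q_1+q_2)²)·A + (q_1²/(q_1+q_2)²)·(1−q_3^n), where A = Σ_{k=0}^{n−1} (1/(n−k))·C(n,k)·(1−q_3)^{n−k}·q_3^k. -/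
open Finset

lemma lin_binom_sum (m : ℕ) (x y : ℝ) :
    ∑ k ∈ Finset.range (m+1), (k:ℝ) * (m.choose k : ℝ) * x^k * y^(m-k)
      = m * x * (x+y)^(m-1) := by
  cases m with
  | zero => simp
  | succ m' =>
    rw [Finset.sum_range_succ']
    simp only [Nat.cast_zero, zero_mul, add_zero]
    have h : ∀ j ∈ Finset.range (m'+1),
        ((j+1:ℕ):ℝ) * ((m'+1).choose (j+1) : ℝ) * x^(j+1) * y^(m'+1-(j+1))
        = (m'+1 : ℝ) * x * (x ^ j * y ^ (m' - j) * ((m'.choose j):ℝ)) := by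
      intro j hj
      have hc : (m'+1) * m'.choose j = (m'+1).choose (j+1) * (j+1) :=
        Nat.add_one_mul_choose_eq m' j
      have hc' : ((m'+1:ℕ):ℝ) * (m'.choose j : ℝ)
          = ((m'+1).choose (j+1) : ℝ) * ((j+1:ℕ):ℝ) := by
        exact_mod_cast congrArg (Nat.cast : ℕ → ℝ) hc
      have : m'+1-(j+1) = m' - j := by omega
      rw [this]
      push_cast at hc' ⊢
      linear_combination (-(x^(j+1) * y^(m'-j))) * hc'
    rw [Finset.sum_congr rfl h, ← Finset.mul_sum, ← add_pow]
    push_cast; ring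

lemma sq_binom_sum (m : ℕ) (x y : ℝ) :
    ∑ k ∈ Finset.range (m+1), (k:ℝ)^2 * (m.choose k : ℝ) * x^k * y^(m-k)
      = m * x * (x+y)^(m-1) + m * (m-1 : ℕ) * x^2 * (x+y)^(m-2) := by
  cases m with
  | zero => simp
  | succ m' =>
    rw [Finset.sum_range_succ']
    norm_num
    have h : ∀ j ∈ Finset.range (m'+1),
        ((j:ℝ)+1)^2 * ((m'+1).choose (j+1) : ℝ) * x^(j+1) * y^(m'+1-(j+1))
        = (m'+1 : ℝ) * x * ((j:ℝ) * ((m'.choose j):ℝ) * x ^ j * y ^ (m' - j))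
          + (m'+1 : ℝ) * x * (x ^ j * y ^ (m' - j) * ((m'.choose j):ℝ)) := by
      intro j hj
      have hc : (m'+1) * m'.choose j = (m'+1).choose (j+1) * (j+1) :=
        Nat.add_one_mul_choose_eq m' j
      have hc' : ((m'+1:ℕ):ℝ) * (m'.choose j : ℝ)
          = ((m'+1).choose (j+1) : ℝ) * ((j+1:ℕ):ℝ) := by
        exact_mod_cast congrArg (Nat.cast : ℕ → ℝ) hc
      have : m'+1-(j+1) = m' - j := by omega
      rw [this]
      push_cast at hc' ⊢
      linear_combination (-((j:ℝ)+1) * x^(j+1) * y^(m'-j)) * hc'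
    rw [Finset.sum_congr rfl h, Finset.sum_add_distrib, ← Finset.mul_sum, ← Finset.mul_sum,
      ← add_pow, lin_binom_sum]
    cases m' with
    | zero => simp
    | succ m'' =>
      have e1 : m'' + 1 + 1 - 1 = m'' + 1 := by omega
      have e2 : m'' + 1 + 1 - 2 = m'' := by omega
      have e3 : m'' + 1 - 1 = m'' := by omega
      rw [e2, e3]
      push_cast
      ring

lemma inner_eval (m : ℕ) (hm1 : 1 ≤ m) (c1 c2 q1 q2 : ℝ) (hs0 : q1 + q2 ≠ 0) :
    ∑ n1 ∈ Finset.range (m + 1),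
      ((n1 : ℝ) / ((n1 : ℝ) + ((m - n1 : ℕ) : ℝ))) ^ 2 *
        c1 * ((m.choose n1 : ℝ)) * q1 ^ n1 * q2 ^ (m - n1) * c2
    = q1 * q2 / (q1 + q2) ^ 2 *
        ((1 / (m : ℝ)) * c1 * (q1 + q2) ^ m * c2)
      + q1 ^ 2 / (q1 + q2) ^ 2 * (c1 * (q1 + q2) ^ m * c2) := by
  have hmne : ((m:ℕ):ℝ) ≠ 0 := Nat.cast_ne_zero.mpr (by omega)
  have hstep : ∀ n1 ∈ Finset.range (m + 1),
      ((n1 : ℝ) / ((n1 : ℝ) + ((m - n1 : ℕ) : ℝ))) ^ 2 *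
        c1 * ((m.choose n1 : ℝ)) * q1 ^ n1 * q2 ^ (m - n1) * c2
      = ((n1:ℝ)^2 * (m.choose n1 : ℝ) * q1 ^ n1 * q2 ^ (m - n1)) *
          (c1 * c2 / (m:ℝ)^2) := by
    intro n1 hn1
    have hle : n1 ≤ m := by simpa using Nat.lt_succ_iff.mp (Finset.mem_range.mp hn1)
    have hc : ((m - n1 : ℕ) : ℝ) = (m:ℝ) - n1 := by
      push_cast [Nat.cast_sub hle]; ring
    rw [hc]
    have : (n1:ℝ) + ((m:ℝ) - n1) = (m:ℝ) := by ring
    rw [this, div_pow]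
    field_simp
  rw [Finset.sum_congr rfl hstep, ← Finset.sum_mul, sq_binom_sum]
  obtain ⟨m', rfl⟩ : ∃ m', m = m' + 1 := ⟨m - 1, by omega⟩
  cases m' with
  | zero =>
    norm_num
    field_simp
    ring
  | succ m'' =>
    have e1 : m'' + 1 + 1 - 1 = m'' + 1 := by omega
    have e2 : m'' + 1 + 1 - 2 = m'' := by omega
    rw [e1, e2]
    push_cast
    field_simp
    ring

theorem multinomial_ratio_sq_expectation (n : ℕ) (hn : 1 ≤ n) (q1 q2 q3 : ℝ)
    (h1 : 0 ≤ q1) (h2 : 0 ≤ q2) (h3 : 0 ≤ q3)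
    (hsum : q1 + q2 + q3 = 1) (hpos : 0 < q1 + q2)
    (A : ℝ)
    (hA : A = ∑ k ∈ Finset.range n,
      (1 / ((n - k : ℕ) : ℝ)) * (n.choose k : ℝ) * (1 - q3) ^ (n - k) * q3 ^ k) :
    ∑ n3 ∈ Finset.range (n + 1), ∑ n1 ∈ Finset.range (n - n3 + 1),
      (if n3 = n then 0 else
        ((n1 : ℝ) / ((n1 : ℝ) + ((n - n3 - n1 : ℕ) : ℝ))) ^ 2 *
          (n.choose n3 : ℝ) * (((n - n3).choose n1 : ℝ)) *
          q1 ^ n1 * q2 ^ (n - n3 - n1) * q3 ^ n3)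
      = q1 * q2 / (q1 + q2) ^ 2 * A + q1 ^ 2 / (q1 + q2) ^ 2 * (1 - q3 ^ n) := by
  have hs : (1:ℝ) - q3 = q1 + q2 := by linarith
  have hs0 : q1 + q2 ≠ 0 := ne_of_gt hpos
  rw [hs] at hA
  rw [Finset.sum_range_succ]
  simp only [if_pos rfl, Finset.sum_const_zero, add_zero]
  have hmain : ∀ k ∈ Finset.range n,
      (∑ n1 ∈ Finset.range (n - k + 1),
        (if k = n then 0 else
          ((n1 : ℝ) / ((n1 : ℝ) + ((n - k - n1 : ℕ) : ℝ))) ^ 2 *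
            (n.choose k : ℝ) * (((n - k).choose n1 : ℝ)) *
            q1 ^ n1 * q2 ^ (n - k - n1) * q3 ^ k))
      = q1 * q2 / (q1 + q2) ^ 2 *
          ((1 / ((n - k : ℕ) : ℝ)) * (n.choose k : ℝ) * (q1 + q2) ^ (n - k) * q3 ^ k)
        + q1 ^ 2 / (q1 + q2) ^ 2 *
          ((n.choose k : ℝ) * (q1 + q2) ^ (n - k) * q3 ^ k) := by
    intro k hk
    have hklt : k < n := Finset.mem_range.mp hk
    have hkne : k ≠ n := Nat.ne_of_lt hklt
    simp only [if_neg hkne]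
    exact inner_eval (n - k) (by omega) ((n.choose k : ℝ)) (q3 ^ k) q1 q2 hs0
  rw [Finset.sum_congr rfl hmain, Finset.sum_add_distrib, ← Finset.mul_sum, ← Finset.mul_sum,
    ← hA]
  have hpow : ∑ k ∈ Finset.range n, (n.choose k : ℝ) * (q1 + q2) ^ (n - k) * q3 ^ k
      = 1 - q3 ^ n := by
    have hb := add_pow q3 (q1 + q2) n
    rw [show q3 + (q1 + q2) = 1 by linarith, one_pow, Finset.sum_range_succ] at hb
    simp only [Nat.sub_self, pow_zero, Nat.choose_self, Nat.cast_one, mul_one] at hb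
    have hc : ∑ k ∈ Finset.range n, (n.choose k : ℝ) * (q1 + q2) ^ (n - k) * q3 ^ k
        = ∑ k ∈ Finset.range n, q3 ^ k * (q1 + q2) ^ (n - k) * ((n.choose k : ℝ)) := by
      apply Finset.sum_congr rfl; intros; ring
    rw [hc]; linarith
  rw [hpow]
  simp
end

section
/- Let m be a mass function on a finite set Y with belief function bel and plausibility function pl. For every subset E ⊆ Y there exists a probability measure pr on Y with pr(B) ≥ bel(B) for all B ⊆ Y and pr(E) = pl(E). -/
open Finset

theorem exists_consistent_measure_attaining_plausibility
    {Y : Type*} [Fintype Y] [DecidableEq Y]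
    (m : Finset Y → ℝ)
    (hm01 : ∀ C : Finset Y, 0 ≤ m C ∧ m C ≤ 1)
    (hempty : m ∅ = 0)
    (htotal : ∑ C ∈ (Finset.univ : Finset Y).powerset, m C = 1) :
    ∀ E : Finset Y, ∃ pr : Y → ℝ,
      (∀ y, 0 ≤ pr y) ∧ (∑ y, pr y) = 1 ∧
      (∀ B : Finset Y, (∑ C ∈ B.powerset, m C) ≤ ∑ y ∈ B, pr y) ∧
      (∑ y ∈ E, pr y) =
        ∑ C ∈ (Finset.univ : Finset Y).powerset.filter (fun C => (C ∩ E).Nonempty), m C := by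
  classical
  intro E
  rcases isEmpty_or_nonempty Y with hY | hY
  · exfalso
    rw [Finset.univ_eq_empty] at htotal
    simp [hempty] at htotal
  obtain ⟨y0⟩ := hY
  set pick : Finset Y → Y := fun C =>
    if h : (C ∩ E).Nonempty then h.choose
    else if h2 : C.Nonempty then h2.choose else y0 with hpick
  have hpick_mem : ∀ C : Finset Y, C.Nonempty → pick C ∈ C := by
    intro C hC
    by_cases h : (C ∩ E).Nonempty
    · have := h.choose_spec
      simp only [hpick, dif_pos h]
      exact (Finset.mem_inter.mp this).1
    · simp only [hpick, dif_neg h, dif_pos hC]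
      exact hC.choose_spec
  have hpick_E : ∀ C : Finset Y, (C ∩ E).Nonempty → pick C ∈ E := by
    intro C h
    have := h.choose_spec
    simp only [hpick, dif_pos h]
    exact (Finset.mem_inter.mp this).2
  have hmne : ∀ C : Finset Y, m C ≠ 0 → C.Nonempty := by
    intro C hC
    rw [Finset.nonempty_iff_ne_empty]
    rintro rfl
    exact hC hempty
  refine ⟨fun y => ∑ C ∈ (Finset.univ : Finset Y).powerset.filter (fun C => pick C = y), m C,
    ?_, ?_, ?_, ?_⟩
  · intro y
    exact Finset.sum_nonneg fun C _ => (hm01 C).1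
  · rw [← htotal]
    exact Finset.sum_fiberwise _ _ _
  · intro B
    rw [Finset.sum_fiberwise_eq_sum_filter]
    have h1 : ∑ C ∈ B.powerset, m C
        = ∑ C ∈ B.powerset.filter (fun C => C.Nonempty), m C := by
      exact (Finset.sum_filter_of_ne (fun C _ h => hmne C h)).symm
    rw [h1]
    apply Finset.sum_le_sum_of_subset_of_nonneg
    · intro C hC
      simp only [Finset.mem_filter, Finset.mem_powerset] at hC ⊢
      exact ⟨Finset.subset_univ C, hC.1 (hpick_mem C hC.2)⟩
    · intro C _ _
      exact (hm01 C).1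
  · rw [Finset.sum_fiberwise_eq_sum_filter]
    rw [Finset.sum_filter, Finset.sum_filter]
    apply Finset.sum_congr rfl
    intro C _
    by_cases hm : m C = 0
    · simp [hm]
    · have hC : C.Nonempty := hmne C hm
      by_cases h : (C ∩ E).Nonempty
      · rw [if_pos (hpick_E C h), if_pos h]
      · rw [if_neg h, if_neg]
        intro hmem
        apply h
        have : pick C ∈ C := hpick_mem C hC
        exact ⟨pick C, Finset.mem_inter.mpr ⟨this, hmem⟩⟩
end
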